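/- arXiv:1508.06359 — 4 statements merged into one kernel-verified Lean document; each statement's English description precedes it below -/
import Mathlib

section
/- For any fixed a > 0 and c > 0, the function b ↦ B(a,b)/B(a,b+c) is monotonically decreasing in b on (0,∞), where B denotes the Beta function. -/
open MeasureTheory intervalIntegral

/-- The Euler Beta function `B(x,y) = ∫₀¹ t^{x-1}(1-t)^{y-1} dt`. -/
noncomputable def betaFn (x y : ℝ) : ℝ :=
  ∫ t in (0:ℝ)..1, t ^ (x - 1) * (1 - t) ^ (y - 1)

/-!
With the weight `f(t) = t^(a-1) (1-t)^(b-1)` on `(0,1)`, the four values `B(a,b)`, `B(a,b+d)`,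
`B(a,b+c)`, `B(a,b+d+c)` are the integrals of `f`, `f g`, `f h`, `f g h` for `g = (1-t)^d` and
`h = (1-t)^c`. Both `g` and `h` decrease in `t`, so Chebyshev's integral inequality
`(∫ f g)(∫ f h) ≤ (∫ f)(∫ f g h)` gives `B(a,b+d) B(a,b+c) ≤ B(a,b) B(a,b+d+c)`, which is the
claimed monotonicity after clearing denominators.
-/

theorem MonovaryOn.setIntegral_mul_mul_setIntegral_mul_le {α : Type*} [MeasurableSpace α]
    {μ : Measure α} [SigmaFinite μ] {s : Set α} {f g h : α → ℝ} (hs : MeasurableSet s)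
    (hgh : MonovaryOn g h s) (hf : ∀ x ∈ s, 0 ≤ f x) (hfi : IntegrableOn f s μ)
    (hfg : IntegrableOn (fun x => f x * g x) s μ) (hfh : IntegrableOn (fun x => f x * h x) s μ)
    (hfgh : IntegrableOn (fun x => f x * g x * h x) s μ) :
    (∫ x in s, f x * g x ∂μ) * ∫ x in s, f x * h x ∂μ ≤
      (∫ x in s, f x ∂μ) * ∫ x in s, f x * g x * h x ∂μ := by
  set ν := μ.restrict s
  have hA : Integrable (fun p : α × α => f p.1 * g p.1 * h p.1 * f p.2) (ν.prod ν) :=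
    hfgh.mul_prod hfi
  have hB : Integrable (fun p : α × α => f p.1 * g p.1 * (f p.2 * h p.2)) (ν.prod ν) :=
    hfg.mul_prod hfh
  have hC : Integrable (fun p : α × α => f p.1 * h p.1 * (f p.2 * g p.2)) (ν.prod ν) :=
    hfh.mul_prod hfg
  have hD : Integrable (fun p : α × α => f p.1 * (f p.2 * g p.2 * h p.2)) (ν.prod ν) :=
    hfi.mul_prod hfgh
  have hkernel : 0 ≤ ∫ p, f p.1 * f p.2 * ((g p.2 - g p.1) * (h p.2 - h p.1)) ∂(ν.prod ν) := by
    refine integral_nonneg_of_ae ?_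
    rw [Measure.prod_restrict]
    filter_upwards [self_mem_ae_restrict (hs.prod hs)] with p ⟨hp1, hp2⟩
    exact mul_nonneg (mul_nonneg (hf _ hp1) (hf _ hp2)) (hgh.sub_mul_sub_nonneg hp1 hp2)
  have hexpand : ∫ p, f p.1 * f p.2 * ((g p.2 - g p.1) * (h p.2 - h p.1)) ∂(ν.prod ν) =
      ∫ p, (f p.1 * g p.1 * h p.1 * f p.2 - f p.1 * g p.1 * (f p.2 * h p.2)) ∂(ν.prod ν) +
        ∫ p, (f p.1 * (f p.2 * g p.2 * h p.2) - f p.1 * h p.1 * (f p.2 * g p.2)) ∂(ν.prod ν) := by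
    rw [← integral_add (by exact hA.sub hB) (by exact hD.sub hC)]
    congr 1 with p
    ring
  rw [hexpand, integral_sub hA hB, integral_sub hD hC,
    integral_prod_mul (fun x => f x * g x * h x) f,
    integral_prod_mul (fun x => f x * g x) (fun x => f x * h x),
    integral_prod_mul (fun x => f x * h x) (fun x => f x * g x),
    integral_prod_mul f (fun x => f x * g x * h x)] at hkernel
  nlinarith [hkernel]

theorem integrableOn_beta {x y : ℝ} (hx : 0 < x) (hy : 0 < y) :
    IntegrableOn (fun t : ℝ => t ^ (x - 1) * (1 - t) ^ (y - 1)) (Set.Ioo 0 1) := by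
  have hconv := Complex.betaIntegral_convergent (u := x) (v := y)
    (by simpa using hx) (by simpa using hy)
  refine ((intervalIntegrable_iff_integrableOn_Ioo_of_le zero_le_one).mp hconv.norm).congr_fun
    (fun t ht => ?_) measurableSet_Ioo
  have ht1 : 0 < 1 - t := sub_pos.2 ht.2
  dsimp only
  have hcast : (1 : ℂ) - t = (1 - t : ℝ) := by norm_num
  rw [norm_mul, hcast, Complex.norm_cpow_eq_rpow_re_of_pos ht.1,
    Complex.norm_cpow_eq_rpow_re_of_pos ht1]
  norm_num

theorem betaFn_eq_setIntegral (x y : ℝ) :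
    betaFn x y = ∫ t in Set.Ioo 0 1, t ^ (x - 1) * (1 - t) ^ (y - 1) := by
  rw [betaFn, integral_of_le zero_le_one, integral_Ioc_eq_integral_Ioo]

theorem betaFn_pos {x y : ℝ} (hx : 0 < x) (hy : 0 < y) : 0 < betaFn x y := by
  refine intervalIntegral_pos_of_pos_on
    ((intervalIntegrable_iff_integrableOn_Ioo_of_le zero_le_one).2 (integrableOn_beta hx hy))
    (fun t ht => ?_) one_pos
  have := sub_pos.2 ht.2
  have := ht.1
  positivity

theorem beta_integrand_mul_one_sub_rpow {x y p t : ℝ} (ht : t < 1) :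
    t ^ (x - 1) * (1 - t) ^ (y - 1) * (1 - t) ^ p = t ^ (x - 1) * (1 - t) ^ (y + p - 1) := by
  rw [mul_assoc, ← Real.rpow_add (sub_pos.2 ht), sub_add_eq_add_sub]

theorem integrableOn_beta_mul_one_sub_rpow {x y p : ℝ} (hx : 0 < x) (hyp : 0 < y + p) :
    IntegrableOn (fun t : ℝ => t ^ (x - 1) * (1 - t) ^ (y - 1) * (1 - t) ^ p) (Set.Ioo 0 1) :=
  (integrableOn_beta hx hyp).congr_fun
    (fun _ ht => (beta_integrand_mul_one_sub_rpow ht.2).symm) measurableSet_Ioo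

theorem setIntegral_beta_mul_one_sub_rpow (x y p : ℝ) :
    ∫ t in Set.Ioo 0 1, t ^ (x - 1) * (1 - t) ^ (y - 1) * (1 - t) ^ p = betaFn x (y + p) := by
  rw [betaFn_eq_setIntegral]
  exact setIntegral_congr_fun measurableSet_Ioo fun _ ht => beta_integrand_mul_one_sub_rpow ht.2

theorem antitoneOn_one_sub_rpow {p : ℝ} (hp : 0 ≤ p) :
    AntitoneOn (fun t : ℝ => (1 - t) ^ p) (Set.Iic 1) := fun _ _ _ ht hst =>
  Real.rpow_le_rpow (sub_nonneg.2 ht) (by linarith) hp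

theorem betaFn_add_mul_betaFn_add_le {a b c d : ℝ} (ha : 0 < a) (hb : 0 < b) (hc : 0 ≤ c)
    (hd : 0 ≤ d) : betaFn a (b + d) * betaFn a (b + c) ≤ betaFn a b * betaFn a (b + d + c) := by
  have hIoo : Set.Ioo (0 : ℝ) 1 ⊆ Set.Iic 1 := fun _ ht => ht.2.le
  have hmono : MonovaryOn (fun t : ℝ => (1 - t) ^ d) (fun t => (1 - t) ^ c) (Set.Ioo 0 1) :=
    ((antitoneOn_one_sub_rpow hd).mono hIoo).monovaryOn ((antitoneOn_one_sub_rpow hc).mono hIoo)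
  have htriple : Set.EqOn
      (fun t : ℝ => t ^ (a - 1) * (1 - t) ^ (b - 1) * (1 - t) ^ d * (1 - t) ^ c)
      (fun t => t ^ (a - 1) * (1 - t) ^ (b + d - 1) * (1 - t) ^ c) (Set.Ioo 0 1) :=
    fun t ht => by simp only [beta_integrand_mul_one_sub_rpow ht.2]
  have key := hmono.setIntegral_mul_mul_setIntegral_mul_le measurableSet_Ioo
    (fun t ht => by have := ht.1; have := sub_pos.2 ht.2; positivity) (integrableOn_beta ha hb)
    (integrableOn_beta_mul_one_sub_rpow ha (by linarith))
    (integrableOn_beta_mul_one_sub_rpow ha (by linarith))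
    ((integrableOn_beta_mul_one_sub_rpow ha (by linarith)).congr_fun htriple.symm
      measurableSet_Ioo)
  rwa [setIntegral_congr_fun measurableSet_Ioo htriple, ← betaFn_eq_setIntegral,
    setIntegral_beta_mul_one_sub_rpow, setIntegral_beta_mul_one_sub_rpow,
    setIntegral_beta_mul_one_sub_rpow] at key

theorem stmt_2 (a c : ℝ) (ha : 0 < a) (hc : 0 < c) :
    AntitoneOn (fun b => betaFn a b / betaFn a (b + c)) (Set.Ioi (0:ℝ)) := by
  intro b (hb : 0 < b) b' _ hbb'
  obtain ⟨d, hd, rfl⟩ : ∃ d, 0 ≤ d ∧ b' = b + d := ⟨b' - b, sub_nonneg.2 hbb', by ring⟩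
  rw [div_le_div_iff₀ (betaFn_pos ha (by linarith)) (betaFn_pos ha (by linarith))]
  exact betaFn_add_mul_betaFn_add_le ha hb hc.le hd
end

section
/- For all real s ≥ s₀ > 0, (s² - 1)/2 - log(s) ≤ ((s₀ + 2)/(2 s₀)) (1 - s)². -/
/-!
Since `log s ≥ 1 - 1/s`, the left side is at most
`(s² - 1)/2 - (1 - 1/s) = (1 - s)² (s + 2)/(2 s)`, and `(s + 2)/(2 s) = 1/2 + 1/s` decreases in `s`.
-/

namespace Real

lemma half_sq_sub_one_sub_log_le {s : ℝ} (hs : 0 < s) :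
    (s ^ 2 - 1) / 2 - log s ≤ (s + 2) / (2 * s) * (1 - s) ^ 2 := by
  have hlog : 1 - s⁻¹ ≤ log s := one_sub_inv_le_log_of_pos hs
  have hid : (s ^ 2 - 1) / 2 - (1 - s⁻¹) = (s + 2) / (2 * s) * (1 - s) ^ 2 := by
    field_simp
    ring
  linarith

end Real

lemma add_two_div_two_mul_le_of_le {s₀ s : ℝ} (h0 : 0 < s₀) (hs : s₀ ≤ s) :
    (s + 2) / (2 * s) ≤ (s₀ + 2) / (2 * s₀) := by
  have hsp : 0 < s := h0.trans_le hs
  rw [div_le_div_iff₀ (by positivity) (by positivity)]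
  nlinarith

theorem stmt_4 (s₀ s : ℝ) (h0 : 0 < s₀) (hs : s₀ ≤ s) :
    (s ^ 2 - 1) / 2 - Real.log s ≤ ((s₀ + 2) / (2 * s₀)) * (1 - s) ^ 2 :=
  (Real.half_sq_sub_one_sub_log_le (h0.trans_le hs)).trans <|
    mul_le_mul_of_nonneg_right (add_two_div_two_mul_le_of_le h0 hs) (sq_nonneg _)
end

section
/- Let h(x) = (1/2)·exp(-|x|) be the density of the standard double-exponential (Laplace) distribution. For any s ≥ s₀ > 0 and any t ∈ ℝ, the Kullback-Leibler divergence satisfies ∫_ℝ h(x)·log( h(x) / ((1/s)·h((x-t)/s)) ) dx ≤ (1/s₀)·(1-s)² + (1/(2s₀))·t². -/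
/-!
Since `log h(x) = -log 2 - |x|`, the divergence equals `log s - E|X| + E|X - t| / s` for `X`
Laplace-distributed. As `X` is symmetric and `|x - t| + |x + t| = 2 max |x| |t|`, we get
`E|X - t| = E max(|X|, |t|)` with `|X|` standard exponential, and `E max(|X|, a) = a + e^(-a)`.
The divergence is therefore `log s - 1 + (e^(-|t|) + |t|) / s`, which `log s ≤ s - 1` and
`e^(-u) ≤ 1 - u + u² / 2` bound by `(1 - s)² / s + t² / (2 s)`.
-/

open MeasureTheory Real

/-- Density of the standard double-exponential (Laplace) distribution. -/
noncomputable def laplacePdf (x : ℝ) : ℝ := (1 / 2) * Real.exp (-|x|)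

open Set Filter Topology

lemma abs_sub_add_abs_add (x t : ℝ) : |x - t| + |x + t| = 2 * max |x| |t| := by
  rcases le_total |x| |t| with h | h <;> simp only [max_eq_left, max_eq_right, h] <;>
    cases abs_cases x <;> cases abs_cases t <;> cases abs_cases (x - t) <;>
    cases abs_cases (x + t) <;> linarith

lemma exp_neg_le_quadratic_of_nonneg {u : ℝ} (hu : 0 ≤ u) : exp (-u) ≤ 1 - u + u ^ 2 / 2 := by
  rw [exp_neg, inv_le_iff_one_le_mul₀' (exp_pos u)]
  calc 1 ≤ (1 + u + u ^ 2 / 2) * (1 - u + u ^ 2 / 2) := by nlinarith [pow_nonneg hu 4]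
    _ ≤ exp u * (1 - u + u ^ 2 / 2) := by
      gcongr
      · nlinarith [sq_nonneg (u - 1)]
      · exact quadratic_le_exp_of_nonneg hu

lemma integrable_comp_abs {E : Type*} [NormedAddCommGroup E] {f : ℝ → E}
    (hf : IntegrableOn f (Ioi 0)) : Integrable (fun x => f |x|) := by
  have hIoi : IntegrableOn (fun x => f |x|) (Ioi 0) :=
    hf.congr_fun (fun x hx => by rw [abs_of_pos (mem_Ioi.1 hx)]) measurableSet_Ioi
  have hIic : IntegrableOn (fun x => f |x|) (Iic 0) := by
    have hneg : MeasurableEmbedding fun x : ℝ => -x := (Homeomorph.neg ℝ).measurableEmbedding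
    rw [← Measure.map_neg_eq_self (volume : Measure ℝ), hneg.integrableOn_map_iff]
    simp_rw [Function.comp_def, abs_neg, neg_preimage, neg_Iic, neg_zero]
    exact (integrableOn_Ici_iff_integrableOn_Ioi).mpr hIoi
  rw [← integrableOn_univ, ← Iic_union_Ioi (a := (0 : ℝ))]
  exact hIic.union hIoi

section MulExpNeg

variable {a : ℝ}

lemma hasDerivAt_neg_add_one_mul_exp_neg (y : ℝ) :
    HasDerivAt (fun y => -(y + 1) * exp (-y)) (y * exp (-y)) y := by
  refine (((hasDerivAt_id' y).add_const 1).neg.mul (hasDerivAt_neg' y).exp).congr_deriv ?_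
  simp only [Pi.neg_apply]
  ring

lemma tendsto_neg_add_one_mul_exp_neg :
    Tendsto (fun y : ℝ => -(y + 1) * exp (-y)) atTop (𝓝 0) := by
  have h := (tendsto_pow_mul_exp_neg_atTop_nhds_zero 1).add tendsto_exp_neg_atTop_nhds_zero
  simpa [add_mul] using h.neg

lemma integrableOn_mul_exp_neg_Ioi (ha : 0 ≤ a) :
    IntegrableOn (fun y => y * exp (-y)) (Ioi a) :=
  integrableOn_Ioi_deriv_of_nonneg' (fun y _ ↦ hasDerivAt_neg_add_one_mul_exp_neg y)
    (fun _ hy ↦ mul_nonneg (ha.trans hy.le) (exp_pos _).le)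
    tendsto_neg_add_one_mul_exp_neg

lemma integral_mul_exp_neg_Ioi (ha : 0 ≤ a) :
    ∫ y in Ioi a, y * exp (-y) = (a + 1) * exp (-a) := by
  rw [integral_Ioi_of_hasDerivAt_of_nonneg' (fun y _ ↦ hasDerivAt_neg_add_one_mul_exp_neg y)
    (fun _ hy ↦ mul_nonneg (ha.trans hy.le) (exp_pos _).le)
    tendsto_neg_add_one_mul_exp_neg]
  ring

lemma integrableOn_exp_neg_mul_max (ha : 0 ≤ a) :
    IntegrableOn (fun y => exp (-y) * max y a) (Ioi 0) := by
  rw [← Ioc_union_Ioi_eq_Ioi ha]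
  refine IntegrableOn.union (Continuous.integrableOn_Ioc (by fun_prop)) ?_
  refine (integrableOn_mul_exp_neg_Ioi ha).congr_fun (fun y hy => ?_) measurableSet_Ioi
  rw [max_eq_left hy.le, mul_comm]

lemma integral_exp_neg_mul_max (ha : 0 ≤ a) :
    ∫ y in Ioi 0, exp (-y) * max y a = a + exp (-a) := by
  have hIoc : ∫ y in Ioc 0 a, exp (-y) * max y a = a * (1 - exp (-a)) := by
    rw [setIntegral_congr_fun measurableSet_Ioc (g := fun y => a * exp (-y))
      (fun y hy => by rw [max_eq_right hy.2, mul_comm]), integral_const_mul,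
      ← intervalIntegral.integral_of_le ha, intervalIntegral.integral_comp_neg, integral_exp,
      neg_zero, exp_zero]
  have hIoi : ∫ y in Ioi a, exp (-y) * max y a = (a + 1) * exp (-a) := by
    rw [← integral_mul_exp_neg_Ioi ha]
    exact setIntegral_congr_fun measurableSet_Ioi
      (fun y hy => by rw [max_eq_left hy.le, mul_comm])
  have hint := integrableOn_exp_neg_mul_max ha
  rw [← Ioc_union_Ioi_eq_Ioi ha] at hint ⊢
  rw [setIntegral_union (Ioc_disjoint_Ioi le_rfl) measurableSet_Ioi
    (hint.mono_set subset_union_left) (hint.mono_set subset_union_right), hIoc, hIoi]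
  ring

end MulExpNeg

lemma laplacePdf_neg (x : ℝ) : laplacePdf (-x) = laplacePdf x := by
  simp only [laplacePdf, abs_neg]

lemma integrable_laplacePdf : Integrable laplacePdf :=
  integrable_comp_abs ((integrableOn_exp_neg_Ioi 0).const_mul (1 / 2))

lemma integral_laplacePdf : ∫ x, laplacePdf x = 1 := by
  rw [show laplacePdf = fun x => (fun y => 1 / 2 * exp (-y)) |x| from rfl, integral_comp_abs,
    integral_const_mul, integral_exp_neg_Ioi_zero]
  norm_num

lemma laplacePdf_mul_abs_sub_add_comp_neg (t x : ℝ) :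
    laplacePdf x * |x - t| + laplacePdf (-x) * |-x - t| = exp (-|x|) * max |x| |t| := by
  rw [laplacePdf_neg, ← mul_add, show -x - t = -(x + t) by ring, abs_neg,
    abs_sub_add_abs_add, laplacePdf]
  ring

lemma integrable_laplacePdf_mul_abs_sub (t : ℝ) :
    Integrable (fun x => laplacePdf x * |x - t|) := by
  refine (integrable_comp_abs (integrableOn_exp_neg_mul_max (abs_nonneg t))).mono'
    (by unfold laplacePdf; fun_prop) (ae_of_all _ fun x => ?_)
  have hneg : 0 ≤ laplacePdf (-x) * |-x - t| := by unfold laplacePdf; positivity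
  rw [← laplacePdf_mul_abs_sub_add_comp_neg, Real.norm_eq_abs, abs_of_nonneg
    (by unfold laplacePdf; positivity)]
  linarith

lemma integral_laplacePdf_mul_abs_sub (t : ℝ) :
    ∫ x, laplacePdf x * |x - t| = exp (-|t|) + |t| := by
  have hg := integrable_laplacePdf_mul_abs_sub t
  calc ∫ x, laplacePdf x * |x - t|
      = (1 / 2) * ∫ x, (laplacePdf x * |x - t| + laplacePdf (-x) * |-x - t|) := by
        rw [integral_add hg hg.comp_neg, integral_neg_eq_self (fun x => laplacePdf x * |x - t|)]
        ring
    _ = (1 / 2) * ∫ x, (fun y => exp (-y) * max y |t|) |x| := by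
        simp_rw [laplacePdf_mul_abs_sub_add_comp_neg]
    _ = exp (-|t|) + |t| := by
        rw [integral_comp_abs (f := fun y => exp (-y) * max y |t|),
          integral_exp_neg_mul_max (abs_nonneg t)]
        ring

lemma log_laplacePdf (x : ℝ) : log (laplacePdf x) = -log 2 - |x| := by
  rw [laplacePdf, log_mul (by norm_num) (exp_pos _).ne', log_exp, one_div, log_inv]
  ring

lemma laplacePdf_mul_log_div_scaled {s : ℝ} (hs : 0 < s) (t x : ℝ) :
    laplacePdf x * log (laplacePdf x / ((1 / s) * laplacePdf ((x - t) / s)))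
      = log s * laplacePdf x + s⁻¹ * (laplacePdf x * |x - t|) - laplacePdf x * |x| := by
  have hpos : ∀ y, 0 < laplacePdf y := fun y => by unfold laplacePdf; positivity
  rw [log_div (hpos x).ne' (by have := hpos ((x - t) / s); positivity),
    log_mul (by positivity) (hpos _).ne', log_laplacePdf, log_laplacePdf, one_div, log_inv,
    abs_div, abs_of_pos hs]
  field_simp
  ring

lemma integral_laplacePdf_mul_log_div_scaled {s : ℝ} (hs : 0 < s) (t : ℝ) :
    ∫ x, laplacePdf x * log (laplacePdf x / ((1 / s) * laplacePdf ((x - t) / s)))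
      = log s - 1 + (exp (-|t|) + |t|) / s := by
  have hA := integrable_laplacePdf.const_mul (log s)
  have hB := (integrable_laplacePdf_mul_abs_sub t).const_mul s⁻¹
  have hAB : Integrable fun x => log s * laplacePdf x + s⁻¹ * (laplacePdf x * |x - t|) :=
    hA.add hB
  have hC : Integrable fun x => laplacePdf x * |x| := by
    simpa using integrable_laplacePdf_mul_abs_sub 0
  simp_rw [laplacePdf_mul_log_div_scaled hs]
  rw [integral_sub hAB hC, integral_add hA hB, integral_const_mul, integral_const_mul,
    integral_laplacePdf, integral_laplacePdf_mul_abs_sub,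
    show ∫ x, laplacePdf x * |x| = 1 by simpa using integral_laplacePdf_mul_abs_sub 0]
  ring

theorem stmt_8 (s₀ s t : ℝ) (h0 : 0 < s₀) (hs : s₀ ≤ s) :
    ∫ x : ℝ, laplacePdf x * Real.log (laplacePdf x / ((1 / s) * laplacePdf ((x - t) / s)))
      ≤ (1 / s₀) * (1 - s) ^ 2 + (1 / (2 * s₀)) * t ^ 2 := by
  have hs_pos : 0 < s := h0.trans_le hs
  have hlog : log s ≤ s - 1 := log_le_sub_one_of_pos hs_pos
  have hexp : exp (-|t|) + |t| ≤ 1 + t ^ 2 / 2 := by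
    have := exp_neg_le_quadratic_of_nonneg (abs_nonneg t)
    rw [sq_abs] at this
    linarith
  rw [integral_laplacePdf_mul_log_div_scaled hs_pos]
  calc log s - 1 + (exp (-|t|) + |t|) / s ≤ s - 1 - 1 + (1 + t ^ 2 / 2) / s := by gcongr
    _ = (1 / s) * (1 - s) ^ 2 + (1 / (2 * s)) * t ^ 2 := by field_simp; ring
    _ ≤ (1 / s₀) * (1 - s) ^ 2 + (1 / (2 * s₀)) * t ^ 2 := by gcongr
end

section
/- For x, y > 2 with x ≤ y, the Beta function satisfies B(1/2, x/2) - B(1/2, y/2) ≤ ((y-x)/2)·B(3/2, (x-2)/2). -/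
open MeasureTheory intervalIntegral

lemma ibeta (p q : ℝ) (hp : -1 < p) (hq : -1 < q) :
    IntervalIntegrable (fun t : ℝ => t ^ p * (1 - t) ^ q) volume 0 1 := by
  have hC := Complex.betaIntegral_convergent (u := (p : ℂ) + 1) (v := (q : ℂ) + 1)
    (by simp; linarith) (by simp; linarith)
  simp only [add_sub_cancel_right] at hC
  have h1 : IntegrableOn (fun t : ℝ => ((t:ℂ) ^ (p:ℂ) * (1 - (t:ℂ)) ^ (q:ℂ)).re)
      (Set.Ioc (0:ℝ) 1) volume := hC.1.re
  have h2 : IntegrableOn (fun t : ℝ => t ^ p * (1 - t) ^ q) (Set.Ioc (0:ℝ) 1) volume := by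
    apply h1.congr_fun ?_ measurableSet_Ioc
    intro t ht
    simp only
    rw [← Complex.ofReal_cpow ht.1.le,
      show ((1:ℂ) - (t:ℂ)) = ((1 - t : ℝ) : ℂ) by push_cast; ring,
      ← Complex.ofReal_cpow (by linarith [ht.2] : (0:ℝ) ≤ 1 - t),
      ← Complex.ofReal_mul, Complex.ofReal_re]
  constructor
  · simpa using h2
  · simpa using h2.mono_set (by simp)

lemma one_sub_rpow_le (u a : ℝ) (hu : 0 < u) (ha : 0 ≤ a) :
    1 - u ^ a ≤ a * (1 - u) / u := by
  have h1 : 1 - u⁻¹ ≤ Real.log u := by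
    have := Real.log_le_sub_one_of_pos (inv_pos.2 hu)
    rw [Real.log_inv] at this; linarith
  have h2 : a * Real.log u + 1 ≤ Real.exp (a * Real.log u) := Real.add_one_le_exp _
  rw [Real.rpow_def_of_pos hu, mul_comm (Real.log u) a]
  have h3 : a * (1 - u⁻¹) ≤ a * Real.log u := mul_le_mul_of_nonneg_left h1 ha
  have h4 : u⁻¹ = 1 / u := by ring
  rw [h4] at h3
  have : a * (1 - 1 / u) = a * (u - 1) / u := by field_simp
  rw [this] at h3
  have : a * (1 - u) / u = -(a * (u - 1) / u) := by ring
  rw [this]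
  linarith

theorem stmt_13 (x y : ℝ) (hx : 2 < x) (hy : 2 < y) (hxy : x ≤ y) :
    betaFn (1 / 2) (x / 2) - betaFn (1 / 2) (y / 2) ≤
      ((y - x) / 2) * betaFn (3 / 2) ((x - 2) / 2) := by
  set a := (y - x) / 2 with ha_def
  have ha : 0 ≤ a := div_nonneg (by linarith) (by norm_num)
  have hf : IntervalIntegrable (fun t : ℝ => t ^ ((1:ℝ)/2 - 1) * (1 - t) ^ (x/2 - 1))
      volume 0 1 := ibeta _ _ (by norm_num) (by linarith)
  have hg : IntervalIntegrable (fun t : ℝ => t ^ ((1:ℝ)/2 - 1) * (1 - t) ^ (y/2 - 1))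
      volume 0 1 := ibeta _ _ (by norm_num) (by linarith)
  have hh : IntervalIntegrable (fun t : ℝ => t ^ ((3:ℝ)/2 - 1) * (1 - t) ^ ((x-2)/2 - 1))
      volume 0 1 := ibeta _ _ (by norm_num) (by linarith)
  unfold betaFn
  rw [← integral_sub hf hg, ← intervalIntegral.integral_const_mul]
  apply integral_mono_on (by norm_num) (hf.sub hg) (hh.const_mul _)
  intro t ht
  obtain ⟨ht0, ht1⟩ := ht
  rcases eq_or_lt_of_le ht0 with h0 | h0
  · rw [← h0]
    rw [Real.zero_rpow (by norm_num), Real.zero_rpow (by norm_num)]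
    simp
  rcases eq_or_lt_of_le ht1 with h1 | h1
  · subst h1
    rw [Real.one_rpow, Real.one_rpow, sub_self,
      Real.zero_rpow (by linarith : x/2 - 1 ≠ 0), Real.zero_rpow (by linarith : y/2 - 1 ≠ 0)]
    have : (0:ℝ) ≤ (0:ℝ) ^ ((x-2)/2 - 1) := Real.rpow_nonneg le_rfl _
    nlinarith
  -- main case 0 < t < 1
  set u := 1 - t with hu_def
  have hu : 0 < u := by simp [hu_def]; linarith
  have key : 1 - u ^ a ≤ a * t / u := by
    have := one_sub_rpow_le u a hu ha
    have ht' : 1 - u = t := by simp [hu_def]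
    rwa [ht'] at this
  have hsplit : u ^ (y/2 - 1) = u ^ (x/2 - 1) * u ^ a := by
    rw [← Real.rpow_add hu]; congr 1; simp [ha_def]; ring
  have hp : (0:ℝ) < t ^ ((1:ℝ)/2 - 1) := Real.rpow_pos_of_pos h0 _
  have hq : (0:ℝ) < u ^ (x/2 - 1) := Real.rpow_pos_of_pos hu _
  have e1 : t ^ ((1:ℝ)/2 - 1) * t = t ^ ((3:ℝ)/2 - 1) := by
    rw [← Real.rpow_add_one h0.ne']; norm_num
  have e2 : u ^ (x/2 - 1) = u ^ ((x-2)/2 - 1) * u := by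
    rw [← Real.rpow_add_one hu.ne']; congr 1; ring
  calc t ^ ((1:ℝ)/2 - 1) * u ^ (x/2 - 1) - t ^ ((1:ℝ)/2 - 1) * u ^ (y/2 - 1)
      = t ^ ((1:ℝ)/2 - 1) * u ^ (x/2 - 1) * (1 - u ^ a) := by rw [hsplit]; ring
    _ ≤ t ^ ((1:ℝ)/2 - 1) * u ^ (x/2 - 1) * (a * t / u) := by
        apply mul_le_mul_of_nonneg_left key (by positivity)
    _ = a * (t ^ ((3:ℝ)/2 - 1) * u ^ ((x-2)/2 - 1)) := by
        rw [← e1, e2]; field_simp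
end
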